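/- arXiv:1412.6292 — 5 statements merged into one kernel-verified Lean document; each statement's English description precedes it below -/
import Mathlib

section
/- Let T₁ and T₂ be stopping times with respect to the filtration (F_t) and let B ≥ 0 be a constant with T₁ ≤ B and T₂ ≤ B almost surely. Then E[(Π(T₂) − Π(T₁))²] ≤ (2B + 1)·E[|T₂ − T₁|]. -/
/-!
Put `S = min T₁ T₂` and `U = max T₁ T₂` and round both up to the grid `δℕ`, giving indices
`σ ≤ τ ≤ K` with `Kδ ≈ B`; they are stopping times for the discrete filtration `k ↦ F (kδ)`.
On the grid, `Π(τδ) - Π(σδ)` is the sum over `k < K` of `𝟙{σ ≤ k < τ} (Π((k+1)δ) - Π(kδ))`, and each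
indicator, together with everything accumulated before step `k`, is `F (kδ)`-measurable and hence
independent of the Poisson(`δ`) increment it multiplies. Expanding the square, the diagonal terms
contribute `(1 + δ) E[Π(τδ) - Π(σδ)]` and each of the `K` cross terms at most `2δ E[Π(τδ) - Π(σδ)]`,
while `E[Π(τδ) - Π(σδ)] = δ E[τ - σ] ≤ E[U - S] + δ`. This gives `(2B + 1 + 3δ)(E[U - S] + δ)` for
the rounded times; right-continuity of the paths and Fatou's lemma let `δ → 0`.
-/

open MeasureTheory ProbabilityTheory

/-- `Pproc` is a unit-rate Poisson process adapted to the filtration `F`: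
it starts at `0`, has nondecreasing right-continuous sample paths, is adapted,
and for `0 ≤ s ≤ t` the increment `Pproc t - Pproc s` is independent of `F s`
and Poisson distributed with mean `t - s`. -/
structure IsUnitRatePoissonProcess {Ω : Type*} {m : MeasurableSpace Ω}
    (μ : Measure Ω) (F : Filtration ℝ m) (Pproc : ℝ → Ω → ℕ) : Prop where
  init : ∀ ω, Pproc 0 ω = 0
  mono : ∀ ω, MonotoneOn (fun t => Pproc t ω) (Set.Ici 0)
  rightCont : ∀ ω, ∀ t : ℝ, 0 ≤ t →
    ContinuousWithinAt (fun s => (Pproc s ω : ℝ)) (Set.Ici t) t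
  adapted : Adapted F Pproc
  indep : ∀ s t : ℝ, 0 ≤ s → s ≤ t →
    Indep (MeasurableSpace.comap (fun ω => Pproc t ω - Pproc s ω) ⊤) (F s) μ
  poisson_law : ∀ s t : ℝ, 0 ≤ s → s ≤ t → ∀ n : ℕ,
    μ {ω | Pproc t ω - Pproc s ω = n} =
      ENNReal.ofReal (Real.exp (-(t - s)) * (t - s) ^ n / n.factorial)

section

open Filter Topology Finset
open scoped ENNReal NNReal Nat

lemma Finset.sq_sum_range {R : Type*} [CommSemiring R] (a : ℕ → R) (n : ℕ) :
    (∑ k ∈ range n, a k) ^ 2 = ∑ k ∈ range n, (a k ^ 2 + 2 * (∑ j ∈ range k, a j) * a k) := by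
  induction n with
  | zero => simp
  | succ n ih => rw [sum_range_succ, sum_range_succ, ← ih]; ring

lemma Monotone.tsub_eq_sum_range_ite {q : ℕ → ℕ} (hq : Monotone q) {a b K : ℕ} (hab : a ≤ b)
    (hbK : b ≤ K) : q b - q a = ∑ k ∈ range K, if k ∈ Ico a b then q (k + 1) - q k else 0 := by
  rw [sum_ite_mem, inter_eq_right.mpr fun k hk => mem_range.mpr ((mem_Ico.mp hk).2.trans_le hbK),
    sum_Ico_eq_sum_range]
  have := sum_range_tsub (f := fun i => q (a + i)) (fun i j hij => hq (by omega)) (b - a)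
  rw [Nat.add_sub_cancel' hab, Nat.add_zero] at this
  exact this.symm

lemma le_natCeil_div_mul {δ : ℝ} (hδ : 0 < δ) (x : ℝ) : x ≤ ⌈x / δ⌉₊ * δ := by
  rw [← div_le_iff₀ hδ]
  exact Nat.le_ceil _

lemma natCeil_div_mul_lt {δ x : ℝ} (hδ : 0 < δ) (hx : 0 ≤ x) : ⌈x / δ⌉₊ * δ < x + δ := by
  calc (⌈x / δ⌉₊ : ℝ) * δ < (x / δ + 1) * δ := by
        gcongr; exact Nat.ceil_lt_add_one (by positivity)
    _ = x + δ := by field_simp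

lemma tendsto_natCeil_div_mul_nhdsGE {x : ℝ} (hx : 0 ≤ x) :
    Tendsto (fun δ => (⌈x / δ⌉₊ : ℝ) * δ) (𝓝[>] 0) (𝓝[≥] x) := by
  have hge : ∀ᶠ δ in 𝓝[>] (0 : ℝ), x ≤ (⌈x / δ⌉₊ : ℝ) * δ :=
    eventually_nhdsWithin_of_forall fun _ hδ => le_natCeil_div_mul hδ x
  have hle : ∀ᶠ δ in 𝓝[>] (0 : ℝ), (⌈x / δ⌉₊ : ℝ) * δ ≤ x + δ :=
    eventually_nhdsWithin_of_forall fun _ hδ => (natCeil_div_mul_lt hδ hx).le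
  have hx_add : Tendsto (fun δ => x + δ) (𝓝[>] 0) (𝓝 x) :=
    tendsto_nhdsWithin_of_tendsto_nhds (by simpa using (continuous_const_add x).tendsto 0)
  exact tendsto_nhdsWithin_iff.mpr
    ⟨tendsto_of_tendsto_of_tendsto_of_le_of_le' tendsto_const_nhds hx_add hge hle, hge⟩

namespace ProbabilityTheory

lemma lintegral_natCast_mul_poissonMeasure (r : ℝ≥0) (f : ℕ → ℝ≥0∞) :
    ∫⁻ n, n * f n ∂poissonMeasure r = r * ∫⁻ n, f (n + 1) ∂poissonMeasure r := by
  simp only [lintegral_countable', poissonMeasure_singleton]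
  rw [tsum_eq_zero_add' ENNReal.summable, ← ENNReal.tsum_mul_left]
  simp only [CharP.cast_eq_zero, zero_mul, zero_add]
  congr 1 with n
  have hstep : ((n + 1 : ℕ) : ℝ≥0∞) * ENNReal.ofReal (Real.exp (-r) * r ^ (n + 1) / (n + 1)!) =
      r * ENNReal.ofReal (Real.exp (-r) * r ^ n / n !) := by
    rw [← ENNReal.ofReal_natCast, ← ENNReal.ofReal_coe_nnreal, ← ENNReal.ofReal_mul (by positivity),
      ← ENNReal.ofReal_mul (by positivity), Nat.factorial_succ]
    congr 1
    push_cast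
    field_simp
    ring
  rw [mul_right_comm, hstep, mul_assoc, mul_comm (ENNReal.ofReal _)]

lemma lintegral_natCast_poissonMeasure (r : ℝ≥0) : ∫⁻ n, (n : ℝ≥0∞) ∂poissonMeasure r = r := by
  simpa using lintegral_natCast_mul_poissonMeasure r 1

lemma lintegral_natCast_sq_poissonMeasure (r : ℝ≥0) :
    ∫⁻ n, (n : ℝ≥0∞) ^ 2 ∂poissonMeasure r = r + r ^ 2 := by
  simp_rw [sq, lintegral_natCast_mul_poissonMeasure, Nat.cast_succ]
  rw [lintegral_add_right _ measurable_const, lintegral_natCast_poissonMeasure]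
  simp [mul_add, add_comm]

end ProbabilityTheory

variable {Ω : Type*} {m : MeasurableSpace Ω}

lemma measurable_apply_of_countable {ι β : Type*} [Countable ι] [MeasurableSpace ι]
    [MeasurableSingletonClass ι] [MeasurableSpace β] {Z : ι → Ω → β}
    (hZ : ∀ i, Measurable (Z i)) {σ : Ω → ι} (hσ : Measurable σ) :
    Measurable fun ω => Z (σ ω) ω :=
  (measurable_from_prod_countable_right (f := fun p : ι × Ω => Z p.1 p.2) hZ).comp
    (hσ.prodMk measurable_id)

lemma integral_le_of_lintegral_ofReal_le {μ : Measure Ω} {f : Ω → ℝ} (hf : 0 ≤ᵐ[μ] f) {c : ℝ}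
    (hc : 0 ≤ c) (h : ∫⁻ ω, ENNReal.ofReal (f ω) ∂μ ≤ ENNReal.ofReal c) : ∫ ω, f ω ∂μ ≤ c := by
  by_cases hfm : AEStronglyMeasurable f μ
  · rw [integral_eq_lintegral_of_nonneg_ae hf hfm]
    exact ENNReal.toReal_le_of_le_ofReal hc h
  · rw [integral_non_aestronglyMeasurable hfm]
    exact hc

lemma measurable_of_isStoppingTime {F : Filtration ℝ m} {T : Ω → ℝ}
    (hT : IsStoppingTime F fun ω => (T ω : WithTop ℝ)) : Measurable T :=
  measurable_of_Iic fun t => by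
    have h := F.le t _ (hT t)
    simp only [WithTop.coe_le_coe] at h
    exact h

structure IsDiscretePoissonProcess (μ : Measure Ω) (G : Filtration ℕ m) (r : ℝ≥0)
    (Z : ℕ → Ω → ℕ) : Prop where
  mono : ∀ ω, Monotone fun k => Z k ω
  adapted : Adapted G Z
  indep : ∀ k, Indep (MeasurableSpace.comap (fun ω => Z (k + 1) ω - Z k ω) ⊤) (G k) μ
  hasLaw : ∀ k, HasLaw (fun ω => Z (k + 1) ω - Z k ω) (poissonMeasure r) μ

noncomputable def indicatorIco (σ τ : Ω → ℕ) (k : ℕ) : Ω → ℝ≥0∞ :=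
  {ω | k ∈ Ico (σ ω) (τ ω)}.indicator 1

lemma measurable_indicatorIco {G : Filtration ℕ m} {σ τ : Ω → ℕ}
    (hσ : IsStoppingTime G fun ω => (σ ω : WithTop ℕ))
    (hτ : IsStoppingTime G fun ω => (τ ω : WithTop ℕ)) (k : ℕ) :
    Measurable[G k] (indicatorIco σ τ k) := by
  refine (measurable_const : Measurable[G k] (1 : Ω → ℝ≥0∞)).indicator ?_
  convert (hσ k).inter (hτ k).compl using 1
  ext ω
  simp [not_le]

lemma natCast_sub_eq_sum_indicatorIco {Z : ℕ → Ω → ℕ} {σ τ : Ω → ℕ} {K : ℕ} {ω : Ω}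
    (hZ : Monotone fun k => Z k ω) (hστ : σ ω ≤ τ ω) (hτK : τ ω ≤ K) :
    ((Z (τ ω) ω - Z (σ ω) ω : ℕ) : ℝ≥0∞) =
      ∑ k ∈ range K, indicatorIco σ τ k ω * (Z (k + 1) ω - Z k ω : ℕ) := by
  rw [hZ.tsub_eq_sum_range_ite hστ hτK, Nat.cast_sum]
  refine sum_congr rfl fun k _ => ?_
  simp only [indicatorIco, Set.indicator_apply, Set.mem_ofPred_eq]
  split_ifs <;> simp

namespace IsDiscretePoissonProcess

variable {μ : Measure Ω} {G : Filtration ℕ m} {r : ℝ≥0} {Z : ℕ → Ω → ℕ}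
  (hZ : IsDiscretePoissonProcess μ G r Z)
include hZ

lemma measurable (k : ℕ) : Measurable (Z k) :=
  (hZ.adapted k).mono (G.le k) le_rfl

lemma lintegral_mul_comp_increment {k : ℕ} {Y : Ω → ℝ≥0∞} (hY : Measurable[G k] Y)
    (g : ℕ → ℝ≥0∞) :
    ∫⁻ ω, Y ω * g (Z (k + 1) ω - Z k ω) ∂μ = (∫⁻ ω, Y ω ∂μ) * ∫⁻ n, g n ∂poissonMeasure r := by
  have hD : Measurable fun ω => Z (k + 1) ω - Z k ω := (hZ.measurable _).sub (hZ.measurable _)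
  rw [mul_comm, ← (hZ.hasLaw k).lintegral_comp (measurable_of_countable g).aemeasurable]
  simp_rw [mul_comm (Y _)]
  exact lintegral_mul_eq_lintegral_mul_lintegral_of_independent_measurableSpace hD.comap_le
    (G.le k) (hZ.indep k) ((measurable_of_countable g).comp (Measurable.of_comap_le le_rfl)) hY

lemma lintegral_mul_increment {k : ℕ} {Y : Ω → ℝ≥0∞} (hY : Measurable[G k] Y) :
    ∫⁻ ω, Y ω * (Z (k + 1) ω - Z k ω : ℕ) ∂μ = (∫⁻ ω, Y ω ∂μ) * r := by
  rw [hZ.lintegral_mul_comp_increment hY, lintegral_natCast_poissonMeasure]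

lemma lintegral_mul_increment_sq {k : ℕ} {Y : Ω → ℝ≥0∞} (hY : Measurable[G k] Y) :
    ∫⁻ ω, Y ω * (Z (k + 1) ω - Z k ω : ℕ) ^ 2 ∂μ = (∫⁻ ω, Y ω ∂μ) * (r + r ^ 2) := by
  rw [hZ.lintegral_mul_comp_increment hY (fun n => (n : ℝ≥0∞) ^ 2),
    lintegral_natCast_sq_poissonMeasure]

variable {σ τ : Ω → ℕ} (hσ : IsStoppingTime G fun ω => (σ ω : WithTop ℕ))
  (hτ : IsStoppingTime G fun ω => (τ ω : WithTop ℕ))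
include hσ hτ

lemma lintegral_indicatorIco_mul_increment_sq (k : ℕ) :
    ∫⁻ ω, (indicatorIco σ τ k ω * (Z (k + 1) ω - Z k ω : ℕ)) ^ 2 ∂μ =
      (1 + r) * ∫⁻ ω, indicatorIco σ τ k ω * (Z (k + 1) ω - Z k ω : ℕ) ∂μ := by
  have hind ω : indicatorIco σ τ k ω ^ 2 = indicatorIco σ τ k ω := by
    simp only [indicatorIco, Set.indicator_apply]
    split_ifs <;> simp
  simp_rw [mul_pow, hind, hZ.lintegral_mul_increment_sq (measurable_indicatorIco hσ hτ k),
    hZ.lintegral_mul_increment (measurable_indicatorIco hσ hτ k)]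
  ring

lemma lintegral_mul_indicatorIco_mul_increment_le {k : ℕ} {Y : Ω → ℝ≥0∞}
    (hY : Measurable[G k] Y) :
    ∫⁻ ω, Y ω * (indicatorIco σ τ k ω * (Z (k + 1) ω - Z k ω : ℕ)) ∂μ ≤ r * ∫⁻ ω, Y ω ∂μ := by
  simp_rw [← mul_assoc]
  rw [hZ.lintegral_mul_increment (by exact hY.mul (measurable_indicatorIco hσ hτ k)), mul_comm]
  gcongr with ω
  exact mul_le_of_le_one_right' (Set.indicator_le_self _ _ ω)

variable {K : ℕ} (hστ : ∀ ω, σ ω ≤ τ ω) (hτK : ∀ ω, τ ω ≤ K)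
include hστ hτK

theorem lintegral_stopped_sub :
    ∫⁻ ω, (Z (τ ω) ω - Z (σ ω) ω : ℕ) ∂μ = r * ∫⁻ ω, (τ ω - σ ω : ℕ) ∂μ := by
  have hind k : Measurable (indicatorIco σ τ k) :=
    (measurable_indicatorIco hσ hτ k).mono (G.le k) le_rfl
  have hD k : Measurable fun ω => ((Z (k + 1) ω - Z k ω : ℕ) : ℝ≥0∞) :=
    (measurable_of_countable _).comp ((hZ.measurable _).sub (hZ.measurable _))
  simp_rw [natCast_sub_eq_sum_indicatorIco (hZ.mono _) (hστ _) (hτK _),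
    natCast_sub_eq_sum_indicatorIco (Z := fun k _ => k) (fun _ _ h => h) (hστ _) (hτK _)]
  rw [lintegral_finsetSum _ fun k _ => by exact (hind k).mul (hD k),
    lintegral_finsetSum _ fun k _ => by exact (hind k).mul measurable_const, mul_sum]
  refine sum_congr rfl fun k _ => ?_
  rw [hZ.lintegral_mul_increment (measurable_indicatorIco hσ hτ k)]
  simp [mul_comm]

theorem lintegral_stopped_sub_sq_le :
    ∫⁻ ω, ((Z (τ ω) ω - Z (σ ω) ω : ℕ) : ℝ≥0∞) ^ 2 ∂μ ≤
      (1 + r + 2 * K * r) * ∫⁻ ω, (Z (τ ω) ω - Z (σ ω) ω : ℕ) ∂μ := by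
  set X : Ω → ℝ≥0∞ := fun ω => (Z (τ ω) ω - Z (σ ω) ω : ℕ)
  set g : ℕ → Ω → ℝ≥0∞ := fun k ω => indicatorIco σ τ k ω * (Z (k + 1) ω - Z k ω : ℕ)
  have hX ω : X ω = ∑ k ∈ range K, g k ω :=
    natCast_sub_eq_sum_indicatorIco (hZ.mono ω) (hστ ω) (hτK ω)
  have hgG k : Measurable[G (k + 1)] (g k) :=
    ((measurable_indicatorIco hσ hτ k).mono (G.mono k.le_succ) le_rfl).mul
      ((measurable_of_countable _).comp
        ((hZ.adapted _).sub ((hZ.adapted k).mono (G.mono k.le_succ) le_rfl)))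
  have hg k : Measurable (g k) := (hgG k).mono (G.le _) le_rfl
  have hPG k : Measurable[G k] fun ω => ∑ j ∈ range k, g j ω :=
    Finset.measurable_sum _ fun j hj => (hgG j).mono (G.mono (mem_range.mp hj)) le_rfl
  have hPX k (hk : k ∈ range K) ω : ∑ j ∈ range k, g j ω ≤ X ω := by
    rw [hX]
    exact sum_le_sum_of_subset (range_subset_range.mpr (mem_range.mp hk).le)
  have hEX : ∫⁻ ω, X ω ∂μ = ∑ k ∈ range K, ∫⁻ ω, g k ω ∂μ := by
    rw [lintegral_congr hX, lintegral_finsetSum _ fun k _ => hg k]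
  calc ∫⁻ ω, X ω ^ 2 ∂μ
      = ∫⁻ ω, ∑ k ∈ range K, (g k ω ^ 2 + 2 * ((∑ j ∈ range k, g j ω) * g k ω)) ∂μ := by
        simp_rw [hX, sq_sum_range, mul_assoc]
    _ = ∑ k ∈ range K, (∫⁻ ω, g k ω ^ 2 ∂μ + 2 * ∫⁻ ω, (∑ j ∈ range k, g j ω) * g k ω ∂μ) := by
        rw [lintegral_finsetSum _ fun k _ => by fun_prop]
        refine sum_congr rfl fun k _ => ?_
        rw [lintegral_add_left (by fun_prop), lintegral_const_mul _ (by fun_prop)]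
    _ ≤ ∑ k ∈ range K, ((1 + r) * ∫⁻ ω, g k ω ∂μ + 2 * (r * ∫⁻ ω, X ω ∂μ)) := by
        gcongr with k hk
        · exact (hZ.lintegral_indicatorIco_mul_increment_sq hσ hτ k).le
        · exact (hZ.lintegral_mul_indicatorIco_mul_increment_le hσ hτ (hPG k)).trans
            (by gcongr with ω; exact hPX k hk ω)
    _ = (1 + r + 2 * K * r) * ∫⁻ ω, X ω ∂μ := by
        rw [sum_add_distrib, ← mul_sum, ← hEX, sum_const, card_range, nsmul_eq_mul]
        ring

end IsDiscretePoissonProcess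

def gridFiltration (F : Filtration ℝ m) {δ : ℝ} (hδ : 0 ≤ δ) : Filtration ℕ m where
  seq k := F (k * δ)
  mono' _ _ hij := F.mono (by gcongr)
  le' _ := F.le _

/-- The cap `K` keeps the index bounded everywhere, not only where `T ≤ B`. -/
noncomputable def gridIndex (δ : ℝ) (K : ℕ) (T : Ω → ℝ) (ω : Ω) : ℕ := min ⌈T ω / δ⌉₊ K

section gridIndex

variable {δ : ℝ} {K : ℕ} {S T : Ω → ℝ} {ω : Ω}

lemma isStoppingTime_gridIndex {F : Filtration ℝ m}
    (hT : IsStoppingTime F fun ω => (T ω : WithTop ℝ)) (hδ : 0 < δ) (K : ℕ) :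
    IsStoppingTime (gridFiltration F hδ.le) fun ω => (gridIndex δ K T ω : WithTop ℕ) := by
  intro k
  change MeasurableSet[F (k * δ)] _
  convert (hT (k * δ)).union (MeasurableSet.const (K ≤ k)) using 1
  ext ω
  simp only [Set.mem_ofPred_eq, Set.mem_union, WithTop.coe_le_coe]
  simp [gridIndex, Nat.ceil_le, div_le_iff₀ hδ]

lemma measurable_gridIndex (hT : Measurable T) : Measurable (gridIndex δ K T) :=
  (hT.div_const δ).nat_ceil.min measurable_const

lemma gridIndex_mono (hδ : 0 < δ) (hST : S ω ≤ T ω) : gridIndex δ K S ω ≤ gridIndex δ K T ω :=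
  min_le_min_right _ (Nat.ceil_mono (by gcongr))

lemma gridIndex_le : gridIndex δ K T ω ≤ K := min_le_right _ _

lemma gridIndex_mul_lt (hδ : 0 < δ) (hT : 0 ≤ T ω) : gridIndex δ K T ω * δ < T ω + δ :=
  lt_of_le_of_lt (by gcongr; exact min_le_left _ _) (natCeil_div_mul_lt hδ hT)

lemma gridIndex_ceil_eq {B : ℝ} (hδ : 0 < δ) (hTB : T ω ≤ B) :
    gridIndex δ ⌈B / δ⌉₊ T ω = ⌈T ω / δ⌉₊ :=
  min_eq_left (Nat.ceil_mono (by gcongr))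

lemma le_gridIndex_ceil_mul {B : ℝ} (hδ : 0 < δ) (hTB : T ω ≤ B) :
    T ω ≤ gridIndex δ ⌈B / δ⌉₊ T ω * δ := by
  rw [gridIndex_ceil_eq hδ hTB]
  exact le_natCeil_div_mul hδ _

end gridIndex

namespace IsUnitRatePoissonProcess

variable {μ : Measure Ω} {F : Filtration ℝ m} {N : ℝ → Ω → ℕ}
  (hN : IsUnitRatePoissonProcess μ F N)
include hN

lemma measurable (t : ℝ) : Measurable (N t) :=
  (hN.adapted t).mono (F.le t) le_rfl

lemma isDiscretePoissonProcess_grid {δ : ℝ} (hδ : 0 ≤ δ) :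
    IsDiscretePoissonProcess μ (gridFiltration F hδ) δ.toNNReal fun k => N (k * δ) where
  mono ω i j hij := hN.mono ω (Set.mem_Ici.mpr (by positivity)) (Set.mem_Ici.mpr (by positivity))
    (by gcongr)
  adapted k := hN.adapted _
  indep k := hN.indep _ _ (by positivity) (by gcongr; simp)
  hasLaw k := by
    have hD : Measurable fun ω => N ((k + 1 : ℕ) * δ) ω - N (k * δ) ω :=
      (hN.measurable _).sub (hN.measurable _)
    refine ⟨hD.aemeasurable, Measure.ext_of_singleton fun n => ?_⟩
    rw [Measure.map_apply hD (measurableSet_singleton n), poissonMeasure_singleton,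
      Real.coe_toNNReal _ hδ]
    have hlen : ((k + 1 : ℕ) : ℝ) * δ - k * δ = δ := by push_cast; ring
    exact (hN.poisson_law (k * δ) _ (by positivity) (by gcongr; simp) n).trans (by rw [hlen])

lemma tendsto_apply_natCeil_div_mul {x : ℝ} (hx : 0 ≤ x) (ω : Ω) :
    Tendsto (fun δ => N (⌈x / δ⌉₊ * δ) ω) (𝓝[>] 0) (𝓝 (N x ω)) :=
  (Nat.isClosedEmbedding_coe_real.tendsto_nhds_iff.mpr (hN.rightCont ω x hx)).comp
    (tendsto_natCeil_div_mul_nhdsGE hx)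

lemma measurable_apply_gridIndex_mul {T : Ω → ℝ} (hT : Measurable T) (δ : ℝ) (K : ℕ) :
    Measurable fun ω => N (gridIndex δ K T ω * δ) ω :=
  measurable_apply_of_countable (Z := fun k : ℕ => N (k * δ)) (fun _ => hN.measurable _)
    (measurable_gridIndex hT)

lemma tendsto_apply_gridIndex_mul {T : Ω → ℝ} {B : ℝ} {ω : Ω} (hT0 : 0 ≤ T ω) (hTB : T ω ≤ B) :
    Tendsto (fun δ => N (gridIndex δ ⌈B / δ⌉₊ T ω * δ) ω) (𝓝[>] 0) (𝓝 (N (T ω) ω)) :=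
  (hN.tendsto_apply_natCeil_div_mul hT0 ω).congr' <| eventually_nhdsWithin_of_forall
    fun δ (hδ : 0 < δ) => by dsimp only; rw [gridIndex_ceil_eq hδ hTB]

lemma ofReal_sq_sub_eq {s t : ℝ} (hs : 0 ≤ s) (ht : 0 ≤ t) (ω : Ω) :
    ENNReal.ofReal (((N t ω : ℝ) - N s ω) ^ 2) =
      ((N (max s t) ω - N (min s t) ω : ℕ) : ℝ≥0∞) ^ 2 := by
  have hmax : N (max s t) ω = max (N s ω) (N t ω) := (hN.mono ω).map_max hs ht
  have hmin : N (min s t) ω = min (N s ω) (N t ω) := (hN.mono ω).map_min hs ht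
  rw [hmax, hmin, ← ENNReal.ofReal_natCast, ← ENNReal.ofReal_pow (Nat.cast_nonneg _),
    Nat.cast_sub min_le_max, Nat.cast_max, Nat.cast_min, max_sub_min_eq_abs, sq_abs]

variable [IsProbabilityMeasure μ] {S U : Ω → ℝ}
  (hS : IsStoppingTime F fun ω => (S ω : WithTop ℝ))
  (hU : IsStoppingTime F fun ω => (U ω : WithTop ℝ))
  (hS0 : ∀ ω, 0 ≤ S ω) (hSU : ∀ ω, S ω ≤ U ω) {B : ℝ} (hB : 0 ≤ B) (hUB : ∀ᵐ ω ∂μ, U ω ≤ B)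
include hS hU hS0 hSU hB hUB

lemma lintegral_sq_sub_gridIndex_le {δ : ℝ} (hδ : 0 < δ) :
    ∫⁻ ω, ((N (gridIndex δ ⌈B / δ⌉₊ U ω * δ) ω - N (gridIndex δ ⌈B / δ⌉₊ S ω * δ) ω : ℕ) :
        ℝ≥0∞) ^ 2 ∂μ ≤
      ENNReal.ofReal (2 * B + 1 + 3 * δ) *
        (∫⁻ ω, ENNReal.ofReal (U ω - S ω) ∂μ + ENNReal.ofReal δ) := by
  set K := ⌈B / δ⌉₊
  have hZ := hN.isDiscretePoissonProcess_grid hδ.le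
  have hσ := isStoppingTime_gridIndex hS hδ K
  have hτ := isStoppingTime_gridIndex hU hδ K
  have hστ ω : gridIndex δ K S ω ≤ gridIndex δ K U ω := gridIndex_mono hδ (hSU ω)
  have hKδ : (K : ℝ) * δ ≤ B + δ := (natCeil_div_mul_lt hδ hB).le
  have hconst : (1 + δ.toNNReal + 2 * K * δ.toNNReal : ℝ≥0∞) ≤
      ENNReal.ofReal (2 * B + 1 + 3 * δ) := by
    calc (1 + δ.toNNReal + 2 * K * δ.toNNReal : ℝ≥0∞) = ENNReal.ofReal (1 + δ + 2 * (K * δ)) := by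
          rw [ENNReal.ofReal_add (by positivity) (by positivity),
            ENNReal.ofReal_add zero_le_one hδ.le, ENNReal.ofReal_mul zero_le_two,
            ENNReal.ofReal_mul (by positivity)]
          simp [mul_assoc, ENNReal.ofReal]
      _ ≤ _ := ENNReal.ofReal_le_ofReal (by linarith)
  have hgap : ∀ᵐ ω ∂μ, ENNReal.ofReal δ * (gridIndex δ K U ω - gridIndex δ K S ω : ℕ) ≤
      ENNReal.ofReal (U ω - S ω) + ENNReal.ofReal δ := by
    filter_upwards [hUB] with ω hω
    have hτU := gridIndex_mul_lt (K := K) hδ ((hS0 ω).trans (hSU ω))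
    have hSσ := le_gridIndex_ceil_mul hδ ((hSU ω).trans hω)
    rw [← ENNReal.ofReal_natCast, ← ENNReal.ofReal_mul hδ.le, Nat.cast_sub (hστ ω)]
    refine (ENNReal.ofReal_le_ofReal ?_).trans ENNReal.ofReal_add_le
    linarith
  calc _ ≤ _ := hZ.lintegral_stopped_sub_sq_le hσ hτ hστ fun _ => gridIndex_le
    _ = (1 + δ.toNNReal + 2 * K * δ.toNNReal : ℝ≥0∞) *
          (δ.toNNReal * ∫⁻ ω, (gridIndex δ K U ω - gridIndex δ K S ω : ℕ) ∂μ) := by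
        rw [hZ.lintegral_stopped_sub hσ hτ hστ fun _ => gridIndex_le]
    _ ≤ _ := by
        gcongr
        rw [← lintegral_const_mul' _ _ ENNReal.coe_ne_top]
        calc _ ≤ ∫⁻ ω, (ENNReal.ofReal (U ω - S ω) + ENNReal.ofReal δ) ∂μ := lintegral_mono_ae hgap
          _ = _ := by
            rw [lintegral_add_right _ measurable_const, lintegral_const, measure_univ, mul_one]

theorem lintegral_sq_sub_le :
    ∫⁻ ω, ((N (U ω) ω - N (S ω) ω : ℕ) : ℝ≥0∞) ^ 2 ∂μ ≤
      ENNReal.ofReal (2 * B + 1) * ∫⁻ ω, ENNReal.ofReal (U ω - S ω) ∂μ := by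
  set I := ∫⁻ ω, ENNReal.ofReal (U ω - S ω) ∂μ
  set f : ℝ → Ω → ℝ≥0∞ := fun δ ω =>
    ((N (gridIndex δ ⌈B / δ⌉₊ U ω * δ) ω - N (gridIndex δ ⌈B / δ⌉₊ S ω * δ) ω : ℕ) : ℝ≥0∞) ^ 2
  have hf δ : Measurable (f δ) :=
    ((measurable_of_countable _).comp
      ((hN.measurable_apply_gridIndex_mul (measurable_of_isStoppingTime hU) δ _).sub
        (hN.measurable_apply_gridIndex_mul (measurable_of_isStoppingTime hS) δ _))).pow_const 2
  have hlim : ∀ᵐ ω ∂μ, Tendsto (fun δ => f δ ω) (𝓝[>] 0)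
      (𝓝 (((N (U ω) ω - N (S ω) ω : ℕ) : ℝ≥0∞) ^ 2)) := by
    filter_upwards [hUB] with ω hω
    exact ((continuous_of_discreteTopology
      (f := fun p : ℕ × ℕ => ((p.1 - p.2 : ℕ) : ℝ≥0∞) ^ 2)).tendsto _).comp
        ((hN.tendsto_apply_gridIndex_mul ((hS0 ω).trans (hSU ω)) hω).prodMk_nhds
          (hN.tendsto_apply_gridIndex_mul (hS0 ω) ((hSU ω).trans hω)))
  have hbound : ∀ᶠ δ in 𝓝[>] 0,
      ∫⁻ ω, f δ ω ∂μ ≤ ENNReal.ofReal (2 * B + 1 + 3 * δ) * (I + ENNReal.ofReal δ) :=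
    eventually_nhdsWithin_of_forall fun δ hδ =>
      hN.lintegral_sq_sub_gridIndex_le hS hU hS0 hSU hB hUB hδ
  have hb : Tendsto (fun δ => ENNReal.ofReal (2 * B + 1 + 3 * δ) * (I + ENNReal.ofReal δ)) (𝓝[>] 0)
      (𝓝 (ENNReal.ofReal (2 * B + 1) * I)) := by
    have hconst : Tendsto (fun δ : ℝ => ENNReal.ofReal (2 * B + 1 + 3 * δ)) (𝓝[>] 0)
        (𝓝 (ENNReal.ofReal (2 * B + 1))) :=
      tendsto_nhdsWithin_of_tendsto_nhds
        ((ENNReal.continuous_ofReal.comp (by fun_prop)).tendsto' _ _ (by simp))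
    have hmesh : Tendsto (fun δ : ℝ => I + ENNReal.ofReal δ) (𝓝[>] 0) (𝓝 I) :=
      tendsto_nhdsWithin_of_tendsto_nhds
        ((continuous_const.add ENNReal.continuous_ofReal).tendsto' _ _ (by simp [I]))
    exact ENNReal.Tendsto.mul hconst (Or.inl (ENNReal.ofReal_pos.mpr (by linarith)).ne') hmesh
      (Or.inr ENNReal.ofReal_ne_top)
  calc ∫⁻ ω, ((N (U ω) ω - N (S ω) ω : ℕ) : ℝ≥0∞) ^ 2 ∂μ
      = ∫⁻ ω, liminf (fun δ => f δ ω) (𝓝[>] 0) ∂μ :=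
        lintegral_congr_ae (hlim.mono fun _ h => h.liminf_eq.symm)
    _ ≤ liminf (fun δ => ∫⁻ ω, f δ ω ∂μ) (𝓝[>] 0) := lintegral_liminf_le hf
    _ ≤ liminf (fun δ => ENNReal.ofReal (2 * B + 1 + 3 * δ) * (I + ENNReal.ofReal δ)) (𝓝[>] 0) :=
        liminf_le_liminf hbound
    _ = ENNReal.ofReal (2 * B + 1) * I := hb.liminf_eq

end IsUnitRatePoissonProcess

end

/-- If `T₁`, `T₂` are stopping times bounded by a constant `B ≥ 0`
almost surely, then `E[(Π(T₂) − Π(T₁))²] ≤ (2B + 1)·E[|T₂ − T₁|]`. -/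
theorem mean_square_poisson_increment_le (Ω : Type*) (m : MeasurableSpace Ω)
    (μ : Measure Ω) [IsProbabilityMeasure μ] (F : Filtration ℝ m)
    (Pproc : ℝ → Ω → ℕ) (hPP : IsUnitRatePoissonProcess μ F Pproc)
    (T₁ T₂ : Ω → ℝ) (hT₁ : IsStoppingTime F (fun ω => (T₁ ω : WithTop ℝ)))
    (hT₂ : IsStoppingTime F (fun ω => (T₂ ω : WithTop ℝ)))
    (hT₁0 : ∀ ω, 0 ≤ T₁ ω) (hT₂0 : ∀ ω, 0 ≤ T₂ ω)
    (B : ℝ) (hB : 0 ≤ B)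
    (hT₁bdd : ∀ᵐ ω ∂μ, T₁ ω ≤ B) (hT₂bdd : ∀ᵐ ω ∂μ, T₂ ω ≤ B) :
    ∫ ω, ((Pproc (T₂ ω) ω : ℝ) - (Pproc (T₁ ω) ω : ℝ)) ^ 2 ∂μ ≤
      (2 * B + 1) * ∫ ω, |T₂ ω - T₁ ω| ∂μ := by
  have hbdd : ∀ᵐ ω ∂μ, max (T₁ ω) (T₂ ω) ≤ B := by
    filter_upwards [hT₁bdd, hT₂bdd] with ω h₁ h₂ using max_le h₁ h₂
  have hkey := hPP.lintegral_sq_sub_le (hT₁.min hT₂) (hT₁.max hT₂)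
    (fun ω => le_min (hT₁0 ω) (hT₂0 ω)) (fun _ => min_le_max) hB hbdd
  simp_rw [← hPP.ofReal_sq_sub_eq (hT₁0 _) (hT₂0 _), max_sub_min_eq_abs] at hkey
  have hint : Integrable (fun ω => |T₂ ω - T₁ ω|) μ := by
    refine Integrable.of_bound ((measurable_of_isStoppingTime hT₂).sub
      (measurable_of_isStoppingTime hT₁)).abs.aestronglyMeasurable B ?_
    filter_upwards [hT₁bdd, hT₂bdd] with ω h₁ h₂
    rw [Real.norm_eq_abs, abs_abs, abs_sub_le_iff]
    constructor <;> linarith [hT₁0 ω, hT₂0 ω]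
  refine integral_le_of_lintegral_ofReal_le (ae_of_all _ fun _ => sq_nonneg _)
    (mul_nonneg (by linarith) (integral_nonneg fun _ => abs_nonneg _)) ?_
  rw [ENNReal.ofReal_mul (by linarith),
    ofReal_integral_eq_lintegral_ofReal hint (ae_of_all _ fun _ => abs_nonneg _)]
  exact hkey
end

section
/- Let x ≥ 0 and y be real numbers, let p ≥ 1 be an integer, and set H := (x + y)^p − x^p. Then H ≤ p·y·x^(p−1) + 2^(p−4)·p·(p−1)·y²·(x^(p−2) + |y|^(p−2)), where for p = 1 the second summand on the right-hand side is interpreted as 0 (its coefficient p(p−1) vanishes) and 2^(p−4) denotes the real number 2 raised to the (possibly negative) integer p − 4. -/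
private lemma choose_aux (n k : ℕ) :
    (k + 2) * (k + 1) * Nat.choose (n + 2) (k + 2) = (n + 2) * ((n + 1) * Nat.choose n k) := by
  have h1 := Nat.add_one_mul_choose_eq (n + 1) (k + 1)
  have h2 := Nat.add_one_mul_choose_eq n k
  calc (k + 2) * (k + 1) * Nat.choose (n + 2) (k + 2)
      = (k + 1) * (Nat.choose (n + 2) (k + 2) * (k + 2)) := by ring
    _ = (k + 1) * ((n + 2) * Nat.choose (n + 1) (k + 1)) := by rw [← h1]
    _ = (n + 2) * (Nat.choose (n + 1) (k + 1) * (k + 1)) := by ring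
    _ = (n + 2) * ((n + 1) * Nat.choose n k) := by rw [← h2]

private lemma sum_bound (x y : ℝ) (hx : 0 ≤ x) (n : ℕ) :
    (x + y) ^ (n + 2) - x ^ (n + 2) - ((n : ℝ) + 2) * y * x ^ (n + 1)
      ≤ ((n : ℝ) + 2) * ((n : ℝ) + 1) / 2 * y ^ 2 * (x + |y|) ^ n := by
  have e1 : (x + y) ^ (n + 2)
      = ∑ k ∈ Finset.range (n + 3), y ^ k * x ^ (n + 2 - k) * (Nat.choose (n + 2) k : ℝ) := by
    rw [add_comm x y, add_pow]
  rw [e1, Finset.sum_range_succ', Finset.sum_range_succ']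
  have e2 : (x + |y|) ^ n
      = ∑ k ∈ Finset.range (n + 1), |y| ^ k * x ^ (n - k) * (Nat.choose n k : ℝ) := by
    rw [add_comm x |y|, add_pow]
  rw [e2, Finset.mul_sum]
  have key : ∑ k ∈ Finset.range (n + 1),
      y ^ (k + 1 + 1) * x ^ (n + 2 - (k + 1 + 1)) * (Nat.choose (n + 2) (k + 1 + 1) : ℝ)
      ≤ ∑ k ∈ Finset.range (n + 1),
        ((n : ℝ) + 2) * ((n : ℝ) + 1) / 2 * y ^ 2 * (|y| ^ k * x ^ (n - k) * (Nat.choose n k : ℝ)) := by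
    apply Finset.sum_le_sum
    intro k hk
    have hk' : k ≤ n := by simpa using Nat.lt_succ_iff.mp (Finset.mem_range.mp hk)
    have hsub : n + 2 - (k + 1 + 1) = n - k := by omega
    rw [hsub]
    have h1 : y ^ (k + 1 + 1) ≤ y ^ 2 * |y| ^ k := by
      calc y ^ (k + 2) ≤ |y ^ (k + 2)| := le_abs_self _
        _ = |y| ^ (k + 2) := by rw [abs_pow]
        _ = |y| ^ 2 * |y| ^ k := by ring
        _ = y ^ 2 * |y| ^ k := by rw [sq_abs]
    have hc : (Nat.choose (n + 2) (k + 2) : ℝ)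
        ≤ ((n : ℝ) + 2) * ((n : ℝ) + 1) / 2 * (Nat.choose n k : ℝ) := by
      have := choose_aux n k
      have hR : ((k : ℝ) + 2) * ((k : ℝ) + 1) * (Nat.choose (n + 2) (k + 2) : ℝ)
          = ((n : ℝ) + 2) * (((n : ℝ) + 1) * (Nat.choose n k : ℝ)) := by
        exact_mod_cast congrArg (Nat.cast : ℕ → ℝ) this
      have hkk : (2 : ℝ) ≤ ((k : ℝ) + 2) * ((k : ℝ) + 1) := by nlinarith [Nat.cast_nonneg (α := ℝ) k]
      have hC : (0 : ℝ) ≤ (Nat.choose (n + 2) (k + 2) : ℝ) := Nat.cast_nonneg _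
      nlinarith
    have hx' : (0 : ℝ) ≤ x ^ (n - k) := pow_nonneg hx _
    have hy2 : (0 : ℝ) ≤ y ^ 2 * |y| ^ k := mul_nonneg (sq_nonneg _) (pow_nonneg (abs_nonneg _) _)
    calc y ^ (k + 1 + 1) * x ^ (n - k) * (Nat.choose (n + 2) (k + 1 + 1) : ℝ)
        ≤ (y ^ 2 * |y| ^ k) * x ^ (n - k) * (Nat.choose (n + 2) (k + 2) : ℝ) := by
          apply mul_le_mul_of_nonneg_right (mul_le_mul_of_nonneg_right h1 hx') (Nat.cast_nonneg _)
      _ ≤ (y ^ 2 * |y| ^ k) * x ^ (n - k) * (((n : ℝ) + 2) * ((n : ℝ) + 1) / 2 * (Nat.choose n k : ℝ)) := by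
          apply mul_le_mul_of_nonneg_left hc (mul_nonneg hy2 hx')
      _ = ((n : ℝ) + 2) * ((n : ℝ) + 1) / 2 * y ^ 2 * (|y| ^ k * x ^ (n - k) * (Nat.choose n k : ℝ)) := by
          ring
  have hf0 : y ^ 0 * x ^ (n + 2 - 0) * (Nat.choose (n + 2) 0 : ℝ) = x ^ (n + 2) := by
    norm_num
  have hf1 : y ^ (0 + 1) * x ^ (n + 2 - (0 + 1)) * (Nat.choose (n + 2) (0 + 1) : ℝ)
      = ((n : ℝ) + 2) * y * x ^ (n + 1) := by
    simp [Nat.choose_one_right]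
    ring
  rw [← hf0, ← hf1]
  linarith [key]

/-- For real `x ≥ 0`, real `y` and integer `p ≥ 1`, with
`H := (x + y)^p − x^p`, one has
`H ≤ p·y·x^(p−1) + 2^(p−4)·p·(p−1)·y²·(x^(p−2) + |y|^(p−2))`;
for `p = 1` the coefficient `p·(p−1)` vanishes, so the second summand is `0`. -/
theorem pow_increment_signed_bound (x y : ℝ) (hx : 0 ≤ x) (p : ℕ) (hp : 1 ≤ p) :
    (x + y) ^ p - x ^ p ≤
      (p : ℝ) * y * x ^ (p - 1) +
        (2 : ℝ) ^ ((p : ℤ) - 4) * (p : ℝ) * ((p : ℝ) - 1) * y ^ 2 *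
          (x ^ (p - 2) + |y| ^ (p - 2)) := by
  match p, hp with
  | 1, _ => simp
  | 2, _ =>
    norm_num
    nlinarith [sq_abs y]
  | (n + 3), _ =>
    have hA := sum_bound x y hx (n + 1)
    have hB := add_pow_le hx (abs_nonneg y) (n + 1)
    simp only [Nat.add_sub_cancel] at hB
    have hpow : (2 : ℝ) ^ (((n + 3 : ℕ) : ℤ) - 4) = (2 : ℝ) ^ n / 2 := by
      have h : ((n + 3 : ℕ) : ℤ) - 4 = (n : ℤ) - 1 := by push_cast; ring
      rw [h, zpow_sub₀ (by norm_num : (2:ℝ) ≠ 0), zpow_natCast, zpow_one]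
    have hc : (0 : ℝ) ≤ ((n : ℝ) + 3) * ((n : ℝ) + 2) / 2 * y ^ 2 := by positivity
    have hB' := mul_le_mul_of_nonneg_left hB hc
    have h1 : n + 3 - 1 = n + 2 := rfl
    have h2 : n + 3 - 2 = n + 1 := rfl
    rw [h1, h2, hpow]
    push_cast at hA ⊢
    nlinarith [hA, hB']
end

section
/- Fix h > 0 and t > 0. Let f : ℝ → ℝ be piecewise constant and right-continuous on [0, t]: there exist points 0 = t₀ < t₁ < … < t_N = t and values c₀, …, c_N ∈ ℝ such that f(s) = c_k for s ∈ [t_k, t_{k+1}) (k = 0, …, N − 1) and f(t) = c_N. Then |∫₀ᵗ σ_h(s)·f(s) ds| ≤ (h/2)·|f(t)| + (h/2)·∑_{k=1}^{N} |c_k − c_{k−1}|, where the sum ∑_{k=1}^{N} |c_k − c_{k−1}| is the total variation of f on [0, t]. Moreover, if t is an integer multiple of h, then the first term can be dropped: |∫₀ᵗ σ_h(s)·f(s) ds| ≤ (h/2)·∑_{k=1}^{N} |c_k − c_{k−1}|. -/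
/-!
The primitive `K(s) = ∫₀ˢ σ_h` is the triangle wave `s ↦ dist(s, hℤ)`: it is `h`-periodic because
`σ_h` is and has mean zero over a period, so it takes values in `[0, h/2]` and vanishes on `hℤ`.
On each piece `[t_k, t_{k+1})` the integral of `σ_h · f` is `c_k (K(t_{k+1}) − K(t_k))`, and
summation by parts turns the total into `c_N K(t) − ∑ (c_{k+1} − c_k) K(t_{k+1})`.
-/

open MeasureTheory

/-- The split-step kernel `σ_h(t) = 1 − 2·(⌊t/(h/2)⌋ mod 2)`: a piecewise constant
right-continuous function taking only the values `+1` and `−1`, switching value at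
integer multiples of `h/2`. -/
noncomputable def splitKernel (h t : ℝ) : ℝ := 1 - 2 * ((⌊t / (h / 2)⌋ % 2 : ℤ) : ℝ)

open Set Function

section PiecewiseConst

variable {g f : ℝ → ℝ}

theorem intervalIntegral_mul_eq_of_eqOn_Ico {a b c : ℝ} (hab : a ≤ b)
    (hf : EqOn f (fun _ ↦ c) (Ico a b)) :
    ∫ x in a..b, g x * f x = c * ∫ x in a..b, g x := by
  rw [← intervalIntegral.integral_const_mul]
  refine intervalIntegral.integral_congr_Ioo_of_le hab fun x hx ↦ ?_
  simp only [hf (Ioo_subset_Ico_self hx), mul_comm]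

theorem IntervalIntegrable.mul_of_eqOn_Ico {a b c : ℝ} (hab : a ≤ b)
    (hg : IntervalIntegrable g volume a b) (hf : EqOn f (fun _ ↦ c) (Ico a b)) :
    IntervalIntegrable (fun x ↦ g x * f x) volume a b := by
  refine (intervalIntegrable_congr_uIoo fun x hx ↦ ?_).1 (hg.mul_const c)
  rw [uIoo_of_le hab] at hx
  simp only [hf (Ioo_subset_Ico_self hx)]

theorem intervalIntegral_mul_eq_sum_of_eqOn_Ico {tt c : ℕ → ℝ} {N : ℕ}
    (hg : ∀ k < N, IntervalIntegrable g volume (tt k) (tt (k + 1)))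
    (htt : ∀ k < N, tt k ≤ tt (k + 1))
    (hf : ∀ k < N, EqOn f (fun _ ↦ c k) (Ico (tt k) (tt (k + 1)))) :
    ∫ x in tt 0..tt N, g x * f x = ∑ k ∈ Finset.range N, c k * ∫ x in tt k..tt (k + 1), g x := by
  rw [← intervalIntegral.sum_integral_adjacent_intervals fun k hk ↦
    (hg k hk).mul_of_eqOn_Ico (htt k hk) (hf k hk)]
  refine Finset.sum_congr rfl fun k hk ↦ ?_
  rw [Finset.mem_range] at hk
  exact intervalIntegral_mul_eq_of_eqOn_Ico (htt k hk) (hf k hk)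

end PiecewiseConst

theorem Finset.sum_range_mul_sub_eq {R : Type*} [CommRing R] (c G : ℕ → R) (N : ℕ) :
    ∑ k ∈ Finset.range N, c k * (G (k + 1) - G k) =
      c N * G N - c 0 * G 0 - ∑ k ∈ Finset.range N, (c (k + 1) - c k) * G (k + 1) := by
  rw [← Finset.sum_range_sub (fun k ↦ c k * G k), eq_sub_iff_add_eq, ← Finset.sum_add_distrib]
  exact Finset.sum_congr rfl fun k _ ↦ by ring

theorem abs_sum_range_mul_sub_le {c G : ℕ → ℝ} {M : ℝ} (N : ℕ) (hG₀ : G 0 = 0)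
    (hG : ∀ k, |G k| ≤ M) :
    |∑ k ∈ Finset.range N, c k * (G (k + 1) - G k)| ≤
      |G N| * |c N| + M * ∑ k ∈ Finset.range N, |c (k + 1) - c k| := by
  rw [Finset.sum_range_mul_sub_eq, hG₀, mul_zero, sub_zero, Finset.mul_sum]
  refine (abs_sub _ _).trans (add_le_add (by rw [abs_mul, mul_comm]) ?_)
  refine (Finset.abs_sum_le_sum_abs _ _).trans (Finset.sum_le_sum fun k _ ↦ ?_)
  rw [abs_mul, mul_comm M]
  exact mul_le_mul_of_nonneg_left (hG _) (abs_nonneg _)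

theorem Finset.sum_Icc_one_eq_sum_range {M : Type*} [AddCommMonoid M] (u : ℕ → M) (N : ℕ) :
    ∑ k ∈ Finset.Icc 1 N, u k = ∑ k ∈ Finset.range N, u (k + 1) := by
  rw [Finset.range_eq_Ico, Finset.sum_Ico_add', zero_add, Finset.Ico_add_one_right_eq_Icc]

section SplitKernel

variable {h : ℝ}

theorem measurable_splitKernel (h : ℝ) : Measurable (splitKernel h) :=
  measurable_const.sub <| measurable_const.mul <|
    (measurable_from_top (f := fun j : ℤ ↦ ((j % 2 : ℤ) : ℝ))).comp
      (measurable_id.div_const _).floor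

theorem abs_splitKernel_le_one (h s : ℝ) : |splitKernel h s| ≤ 1 := by
  rcases Int.emod_two_eq_zero_or_one ⌊s / (h / 2)⌋ with hj | hj <;>
    norm_num [splitKernel, hj]

theorem intervalIntegrable_splitKernel (h a b : ℝ) :
    IntervalIntegrable (splitKernel h) volume a b :=
  (intervalIntegrable_const (c := (1 : ℝ))).mono_fun
    (measurable_splitKernel h).aestronglyMeasurable
    (Filter.Eventually.of_forall fun s ↦ by simpa using abs_splitKernel_le_one h s)

theorem splitKernel_periodic (hh : h ≠ 0) : Periodic (splitKernel h) h := fun s ↦ by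
  have : (s + h) / (h / 2) = s / (h / 2) + (2 : ℤ) := by field_simp; ring
  simp only [splitKernel, this, Int.floor_add_intCast, Int.add_emod_right]

theorem splitKernel_eq_one_of_mem_Ico (hh : 0 < h) {s : ℝ} (hs : s ∈ Ico 0 (h / 2)) :
    splitKernel h s = 1 := by
  have : ⌊s / (h / 2)⌋ = 0 := by
    rw [Int.floor_eq_iff, Int.cast_zero, zero_add, le_div_iff₀ (by positivity),
      div_lt_one (by positivity)]
    exact ⟨by linarith [hs.1], hs.2⟩
  simp [splitKernel, this]

theorem splitKernel_eq_neg_one_of_mem_Ico (hh : 0 < h) {s : ℝ} (hs : s ∈ Ico (h / 2) h) :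
    splitKernel h s = -1 := by
  have : ⌊s / (h / 2)⌋ = 1 := by
    rw [Int.floor_eq_iff, Int.cast_one, le_div_iff₀ (by positivity),
      div_lt_iff₀ (by positivity)]
    exact ⟨by linarith [hs.1], by linarith [hs.2]⟩
  norm_num [splitKernel, this]

noncomputable def splitKernelPrimitive (h s : ℝ) : ℝ := ∫ u in (0 : ℝ)..s, splitKernel h u

theorem splitKernelPrimitive_zero (h : ℝ) : splitKernelPrimitive h 0 = 0 :=
  intervalIntegral.integral_same

theorem splitKernelPrimitive_sub_eq_integral (h a b : ℝ) :
    splitKernelPrimitive h b - splitKernelPrimitive h a = ∫ u in a..b, splitKernel h u :=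
  intervalIntegral.integral_interval_sub_left (intervalIntegrable_splitKernel h _ _)
    (intervalIntegrable_splitKernel h _ _)

theorem splitKernelPrimitive_eq_self_of_mem_Icc (hh : 0 < h) {s : ℝ} (hs : s ∈ Icc 0 (h / 2)) :
    splitKernelPrimitive h s = s := by
  rw [splitKernelPrimitive, intervalIntegral.integral_congr_Ioo_of_le hs.1
    (g := fun _ ↦ 1) fun u hu ↦ splitKernel_eq_one_of_mem_Ico hh ⟨hu.1.le, hu.2.trans_le hs.2⟩]
  simp

theorem splitKernelPrimitive_eq_sub_of_mem_Icc (hh : 0 < h) {s : ℝ} (hs : s ∈ Icc (h / 2) h) :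
    splitKernelPrimitive h s = h - s := by
  have hhalf := splitKernelPrimitive_eq_self_of_mem_Icc hh ⟨by positivity, le_rfl⟩
  rw [← sub_add_cancel (splitKernelPrimitive h s) (splitKernelPrimitive h (h / 2)),
    splitKernelPrimitive_sub_eq_integral, hhalf, intervalIntegral.integral_congr_Ioo_of_le hs.1
    (g := fun _ ↦ -1) fun u hu ↦
      splitKernel_eq_neg_one_of_mem_Ico hh ⟨hu.1.le, hu.2.trans_le hs.2⟩,
    intervalIntegral.integral_const, smul_eq_mul]
  ring

theorem splitKernelPrimitive_periodic (hh : 0 < h) : Periodic (splitKernelPrimitive h) h := by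
  intro s
  have hperiod : splitKernelPrimitive h h = 0 := by
    simpa using splitKernelPrimitive_eq_sub_of_mem_Icc hh ⟨by linarith, le_rfl⟩
  unfold splitKernelPrimitive at hperiod ⊢
  rw [(splitKernel_periodic hh.ne').intervalIntegral_add_eq_add 0 s
    (intervalIntegrable_splitKernel h), zero_add, hperiod, add_zero]

theorem abs_splitKernelPrimitive_le (hh : 0 < h) (s : ℝ) :
    |splitKernelPrimitive h s| ≤ h / 2 := by
  obtain ⟨y, ⟨hy₀, hyh⟩, hsy⟩ := (splitKernelPrimitive_periodic hh).exists_mem_Ico₀ hh s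
  rw [hsy, abs_le]
  rcases le_total y (h / 2) with hy | hy
  · rw [splitKernelPrimitive_eq_self_of_mem_Icc hh ⟨hy₀, hy⟩]
    constructor <;> linarith
  · rw [splitKernelPrimitive_eq_sub_of_mem_Icc hh ⟨hy, hyh.le⟩]
    constructor <;> linarith

theorem splitKernelPrimitive_natCast_mul (hh : 0 < h) (n : ℕ) :
    splitKernelPrimitive h (n * h) = 0 := by
  rw [(splitKernelPrimitive_periodic hh).nat_mul_eq, splitKernelPrimitive_zero]

end SplitKernel

theorem splitKernel_mul_piecewiseConst_integral_bound_general
    (h t : ℝ) (hh : 0 < h)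
    (N : ℕ) (tt : ℕ → ℝ) (c : ℕ → ℝ) (f : ℝ → ℝ)
    (htt0 : tt 0 = 0) (httN : tt N = t)
    (htt : ∀ k < N, tt k < tt (k + 1))
    (hf : ∀ k < N, ∀ s ∈ Set.Ico (tt k) (tt (k + 1)), f s = c k)
    (hft : f t = c N) :
    |∫ s in (0:ℝ)..t, splitKernel h s * f s| ≤
        h / 2 * |f t| + h / 2 * ∑ k ∈ Finset.Icc 1 N, |c k - c (k - 1)| ∧
      ((∃ n : ℕ, t = n * h) →
        |∫ s in (0:ℝ)..t, splitKernel h s * f s| ≤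
          h / 2 * ∑ k ∈ Finset.Icc 1 N, |c k - c (k - 1)|) := by
  have hI : ∫ s in (0:ℝ)..t, splitKernel h s * f s = ∑ k ∈ Finset.range N,
      c k * (splitKernelPrimitive h (tt (k + 1)) - splitKernelPrimitive h (tt k)) := by
    rw [← htt0, ← httN, intervalIntegral_mul_eq_sum_of_eqOn_Ico
      (fun _ _ ↦ intervalIntegrable_splitKernel h _ _) (fun k hk ↦ (htt k hk).le) hf]
    simp only [splitKernelPrimitive_sub_eq_integral]
  have hK₀ : splitKernelPrimitive h (tt 0) = 0 := by rw [htt0, splitKernelPrimitive_zero]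
  have hbound := abs_sum_range_mul_sub_le (c := c) N hK₀ fun k ↦
    abs_splitKernelPrimitive_le hh (tt k)
  rw [Finset.sum_Icc_one_eq_sum_range (fun k ↦ |c k - c (k - 1)|), hI, hft]
  simp only [add_tsub_cancel_right]
  refine ⟨hbound.trans ?_, fun ⟨n, hn⟩ ↦ hbound.trans ?_⟩
  · gcongr
    exact abs_splitKernelPrimitive_le hh _
  · rw [httN, hn, splitKernelPrimitive_natCast_mul hh n, abs_zero, zero_mul, zero_add]

/-- For a piecewise constant right-continuous `f` on `[0,t]` with
jump points `0 = t₀ < t₁ < … < t_N = t` and values `c₀, …, c_N`, one has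
`|∫₀ᵗ σ_h(s)·f(s) ds| ≤ (h/2)·|f(t)| + (h/2)·∑_{k=1}^N |c_k − c_{k−1}|`, and if `t` is
an integer multiple of `h` then the first term may be dropped. -/
theorem splitKernel_mul_piecewiseConst_integral_bound
    (h t : ℝ) (hh : 0 < h) (ht : 0 < t)
    (N : ℕ) (tt : ℕ → ℝ) (c : ℕ → ℝ) (f : ℝ → ℝ)
    (htt0 : tt 0 = 0) (httN : tt N = t)
    (htt : ∀ k < N, tt k < tt (k + 1))
    (hf : ∀ k < N, ∀ s ∈ Set.Ico (tt k) (tt (k + 1)), f s = c k)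
    (hft : f t = c N) :
    |∫ s in (0:ℝ)..t, splitKernel h s * f s| ≤
        h / 2 * |f t| + h / 2 * ∑ k ∈ Finset.Icc 1 N, |c k - c (k - 1)| ∧
      ((∃ n : ℕ, t = n * h) →
        |∫ s in (0:ℝ)..t, splitKernel h s * f s| ≤
          h / 2 * ∑ k ∈ Finset.Icc 1 N, |c k - c (k - 1)|) :=
  splitKernel_mul_piecewiseConst_integral_bound_general h t hh N tt c f htt0 httN htt hf hft
end

section
/- Under the stated assumptions, for every integer p ≥ 2 and every y ∈ ℤ₊^D (writing x := lᵀy ≥ 0 and δ := max_{1 ≤ r ≤ R} |lᵀN_r|): ∑_{r=1}^{R} w_r(y)·[ (lᵀ(y − N_r))^p − (lᵀy)^p ] ≤ p·(A + α·x)·x^(p−1) + 2^(p−3)·p·(p−1)·(B + β₁·x + β₂·x²)·( x^(p−2) + δ^(p−2) ). -/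
open Finset

/-!
Write `x = lᵀy` and `ν_r = lᵀN_r`, so that reaction `r` moves `x` to `x - ν_r`. A second-order
Taylor expansion of `t ↦ t ^ p` at `x`, on the interval `[-(x + δ), x + δ]` containing `x - ν_r`,
gives `(x - ν_r)^p - x^p ≤ -p ν_r x^(p-1) + p(p-1)/2 · ν_r² · (x + δ)^(p-2)`,
and `(x + δ)^(p-2) ≤ 2^(p-3) (x^(p-2) + δ^(p-2))` by convexity of `t ↦ t^(p-2)`.
Summing against the rates `w_r(y)`, the first-order terms are controlled by the drift bound (i)
and the second-order terms by the diffusion bound (ii).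
-/

theorem abs_pow_sub_pow_sub_deriv_mul_le {a b M : ℝ} (ha : |a| ≤ M) (hb : |b| ≤ M) (n : ℕ) :
    |b ^ (n + 2) - a ^ (n + 2) - (n + 2) * a ^ (n + 1) * (b - a)| ≤
      (n + 2) * (n + 1) / 2 * (b - a) ^ 2 * M ^ n := by
  induction n with
  | zero =>
    rw [show b ^ 2 - a ^ 2 - ((0 : ℕ) + 2 : ℝ) * a ^ 1 * (b - a) = (b - a) ^ 2 by push_cast; ring,
      abs_of_nonneg (sq_nonneg _)]
    norm_num
  | succ n ih =>
    -- the remainders `g n` satisfy `g (n + 1) = b · g n + (n + 2) a^(n+1) (b - a)²`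
    have hM : 0 ≤ M := (abs_nonneg a).trans ha
    have hrec : b ^ (n + 1 + 2) - a ^ (n + 1 + 2) - ((n + 1 : ℕ) + 2) * a ^ (n + 1 + 1) * (b - a) =
        b * (b ^ (n + 2) - a ^ (n + 2) - (n + 2) * a ^ (n + 1) * (b - a)) +
          (n + 2) * a ^ (n + 1) * (b - a) ^ 2 := by
      push_cast; ring
    have hpow : |a ^ (n + 1)| ≤ M ^ (n + 1) := by
      rw [abs_pow]; exact pow_le_pow_left₀ (abs_nonneg a) ha _
    calc _ = |b * (b ^ (n + 2) - a ^ (n + 2) - (n + 2) * a ^ (n + 1) * (b - a)) +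
          (n + 2) * a ^ (n + 1) * (b - a) ^ 2| := by rw [hrec]
      _ ≤ |b| * |b ^ (n + 2) - a ^ (n + 2) - (n + 2) * a ^ (n + 1) * (b - a)| +
          (n + 2) * |a ^ (n + 1)| * (b - a) ^ 2 := by
          refine (abs_add_le _ _).trans_eq ?_
          rw [abs_mul, abs_mul, abs_mul, abs_sq, abs_of_nonneg (by positivity : (0 : ℝ) ≤ n + 2)]
      _ ≤ M * ((n + 2) * (n + 1) / 2 * (b - a) ^ 2 * M ^ n) +
          (n + 2) * M ^ (n + 1) * (b - a) ^ 2 := by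
          gcongr
      _ = _ := by push_cast; ring

theorem add_pow_le_two_zpow_mul_add_pow {a b : ℝ} (ha : 0 ≤ a) (hb : 0 ≤ b) (n : ℕ) :
    (a + b) ^ n ≤ 2 ^ ((n : ℤ) - 1) * (a ^ n + b ^ n) := by
  cases n with
  | zero => norm_num
  | succ k =>
    rw [Nat.cast_succ, add_sub_cancel_right, zpow_natCast]
    exact add_pow_le ha hb (k + 1)

theorem sub_pow_sub_pow_le {x ν δ : ℝ} (hx : 0 ≤ x) (hν : |ν| ≤ δ) (n : ℕ) :
    (x - ν) ^ (n + 2) - x ^ (n + 2) ≤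
      -((n + 2) * ν * x ^ (n + 1)) +
        (n + 2) * (n + 1) / 2 * ν ^ 2 * (2 ^ ((n : ℤ) - 1) * (x ^ n + δ ^ n)) := by
  have hδ : 0 ≤ δ := (abs_nonneg ν).trans hν
  have hremainder := abs_pow_sub_pow_sub_deriv_mul_le (a := x) (b := x - ν) (M := x + δ)
    (by rw [abs_of_nonneg hx]; linarith) (by linarith [abs_sub x ν, abs_of_nonneg hx]) n
  have hconvex : (x + δ) ^ n ≤ 2 ^ ((n : ℤ) - 1) * (x ^ n + δ ^ n) :=
    add_pow_le_two_zpow_mul_add_pow hx hδ n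
  have hcoeff : 0 ≤ (n + 2) * (n + 1) / 2 * ν ^ 2 := by positivity
  rw [sub_sub_cancel_left, neg_sq] at hremainder
  nlinarith [le_abs_self ((x - ν) ^ (n + 2) - x ^ (n + 2) - (n + 2) * x ^ (n + 1) * -ν),
    mul_le_mul_of_nonneg_left hconvex hcoeff]

theorem sum_mul_sub_pow_sub_pow_le {ι : Type*} [Fintype ι] {w ν : ι → ℝ} (hw : ∀ r, 0 ≤ w r)
    {x δ : ℝ} (hx : 0 ≤ x) (hν : ∀ r, |ν r| ≤ δ) (n : ℕ) :
    ∑ r, w r * ((x - ν r) ^ (n + 2) - x ^ (n + 2)) ≤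
      (n + 2) * x ^ (n + 1) * -(∑ r, ν r * w r) +
        (n + 2) * (n + 1) / 2 * (∑ r, ν r ^ 2 * w r) * (2 ^ ((n : ℤ) - 1) * (x ^ n + δ ^ n)) := by
  calc _ ≤ ∑ r, w r * (-((n + 2) * ν r * x ^ (n + 1)) +
        (n + 2) * (n + 1) / 2 * ν r ^ 2 * (2 ^ ((n : ℤ) - 1) * (x ^ n + δ ^ n))) :=
        sum_le_sum fun r _ => mul_le_mul_of_nonneg_left (sub_pow_sub_pow_le hx (hν r) n) (hw r)
    _ = _ := by
      simp only [mul_sum, sum_mul, ← sum_neg_distrib, ← sum_add_distrib]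
      exact sum_congr rfl fun r _ => by ring

theorem generator_pow_bound_general (D R : ℕ)
    (Nm : Matrix (Fin D) (Fin R) ℤ) (l : Fin D → ℝ) (hl : ∀ i, 0 < l i)
    (w : Fin R → (Fin D → ℕ) → ℝ) (hw : ∀ r y, 0 ≤ w r y)
    (A α B β₁ β₂ : ℝ)
    (h1 : ∀ y : Fin D → ℕ,
      -(∑ r, (∑ i, l i * (Nm i r : ℝ)) * w r y) ≤ A + α * ∑ i, l i * (y i : ℝ))
    (h2 : ∀ y : Fin D → ℕ,
      (1 / 2 : ℝ) * ∑ r, (∑ i, l i * (Nm i r : ℝ)) ^ 2 * w r y ≤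
        B + β₁ * (∑ i, l i * (y i : ℝ)) + β₂ * (∑ i, l i * (y i : ℝ)) ^ 2)
    (p : ℕ) (hp : 2 ≤ p) (y : Fin D → ℕ) :
    ∑ r, w r y *
        ((∑ i, l i * ((y i : ℝ) - (Nm i r : ℝ))) ^ p - (∑ i, l i * (y i : ℝ)) ^ p) ≤
      (p : ℝ) * (A + α * ∑ i, l i * (y i : ℝ)) * (∑ i, l i * (y i : ℝ)) ^ (p - 1) +
        (2 : ℝ) ^ ((p : ℤ) - 3) * (p : ℝ) * ((p : ℝ) - 1) *
          (B + β₁ * (∑ i, l i * (y i : ℝ)) + β₂ * (∑ i, l i * (y i : ℝ)) ^ 2) *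
          ((∑ i, l i * (y i : ℝ)) ^ (p - 2) +
            (⨆ r : Fin R, |∑ i, l i * (Nm i r : ℝ)|) ^ (p - 2)) := by
  obtain ⟨n, rfl⟩ : ∃ n, p = n + 2 := ⟨p - 2, by omega⟩
  set x := ∑ i, l i * (y i : ℝ)
  set ν : Fin R → ℝ := fun r => ∑ i, l i * (Nm i r : ℝ)
  set δ := ⨆ r, |ν r|
  have hx : 0 ≤ x := sum_nonneg fun i _ => mul_nonneg (hl i).le (Nat.cast_nonneg _)
  have hν : ∀ r, |ν r| ≤ δ := le_ciSup (Set.finite_range _).bddAbove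
  have hδ : 0 ≤ δ := Real.iSup_nonneg fun r => abs_nonneg (ν r)
  have hshift : ∀ r, ∑ i, l i * ((y i : ℝ) - (Nm i r : ℝ)) = x - ν r := fun r => by
    simp only [mul_sub, sum_sub_distrib, x, ν]
  have hexp : ((n + 2 : ℕ) : ℤ) - 3 = (n : ℤ) - 1 := by push_cast; ring
  simp only [hshift, Nat.add_sub_cancel, show n + 2 - 1 = n + 1 from rfl, hexp]
  calc _ ≤ (n + 2) * x ^ (n + 1) * -(∑ r, ν r * w r y) +
        (n + 2) * (n + 1) / 2 * (∑ r, ν r ^ 2 * w r y) * (2 ^ ((n : ℤ) - 1) * (x ^ n + δ ^ n)) :=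
        sum_mul_sub_pow_sub_pow_le (hw · y) hx hν n
    _ ≤ (n + 2) * x ^ (n + 1) * (A + α * x) +
        (n + 2) * (n + 1) / 2 * (2 * (B + β₁ * x + β₂ * x ^ 2)) *
          (2 ^ ((n : ℤ) - 1) * (x ^ n + δ ^ n)) := by
        gcongr
        · exact h1 y
        · linarith [h2 y]
    _ = _ := by push_cast; ring

/-- Under the drift and diffusion bounds (i) and (ii) for the
reaction network `[N, w]` with positive weight vector `l`, for every integer `p ≥ 2`
and every state `y ∈ ℤ₊^D`, writing `x := lᵀy` and `δ := max_r |lᵀN_r|`,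
`∑_r w_r(y)·[(lᵀ(y − N_r))^p − (lᵀy)^p]
  ≤ p·(A + α·x)·x^(p−1) + 2^(p−3)·p·(p−1)·(B + β₁·x + β₂·x²)·(x^(p−2) + δ^(p−2))`. -/
theorem generator_pow_bound (D R : ℕ) (hD : 1 ≤ D) (hR : 1 ≤ R)
    (Nm : Matrix (Fin D) (Fin R) ℤ) (l : Fin D → ℝ) (hl : ∀ i, 0 < l i)
    (w : Fin R → (Fin D → ℕ) → ℝ) (hw : ∀ r y, 0 ≤ w r y)
    (A α B β₁ β₂ : ℝ) (hB : 0 ≤ B) (hβ₁ : 0 ≤ β₁) (hβ₂ : 0 ≤ β₂)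
    (h1 : ∀ y : Fin D → ℕ,
      -(∑ r, (∑ i, l i * (Nm i r : ℝ)) * w r y) ≤ A + α * ∑ i, l i * (y i : ℝ))
    (h2 : ∀ y : Fin D → ℕ,
      (1 / 2 : ℝ) * ∑ r, (∑ i, l i * (Nm i r : ℝ)) ^ 2 * w r y ≤
        B + β₁ * (∑ i, l i * (y i : ℝ)) + β₂ * (∑ i, l i * (y i : ℝ)) ^ 2)
    (p : ℕ) (hp : 2 ≤ p) (y : Fin D → ℕ) :
    ∑ r, w r y *
        ((∑ i, l i * ((y i : ℝ) - (Nm i r : ℝ))) ^ p - (∑ i, l i * (y i : ℝ)) ^ p) ≤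
      (p : ℝ) * (A + α * ∑ i, l i * (y i : ℝ)) * (∑ i, l i * (y i : ℝ)) ^ (p - 1) +
        (2 : ℝ) ^ ((p : ℤ) - 3) * (p : ℝ) * ((p : ℝ) - 1) *
          (B + β₁ * (∑ i, l i * (y i : ℝ)) + β₂ * (∑ i, l i * (y i : ℝ)) ^ 2) *
          ((∑ i, l i * (y i : ℝ)) ^ (p - 2) +
            (⨆ r : Fin R, |∑ i, l i * (Nm i r : ℝ)|) ^ (p - 2)) :=
  generator_pow_bound_general D R Nm l hl w hw A α B β₁ β₂ h1 h2 p hp y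
end

section
/- Under the stated assumptions, for every integer p ≥ 2 there exists a constant C > 0, depending only on p, A, α, B, β₁, β₂ and δ := max_{1 ≤ r ≤ R} |lᵀN_r|, such that for all y ∈ ℤ₊^D: ∑_{r=1}^{R} w_r(y)·[ (lᵀ(y − N_r))^p − (lᵀy)^p ] ≤ C·( 1 + (lᵀy)^p ). -/
open Finset

private lemma pow_le_one_add_pow {s : ℝ} (hs : 0 ≤ s) {k n : ℕ} (hk : k ≤ n) :
    s ^ k ≤ 1 + s ^ n := by
  rcases le_total s 1 with h | h
  · have h1 : s ^ k ≤ 1 := pow_le_one₀ hs h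
    have h2 : 0 ≤ s ^ n := pow_nonneg hs n
    linarith
  · have h1 : s ^ k ≤ s ^ n := pow_le_pow_right₀ h hk
    linarith

private lemma binom_key (m : ℕ) (s d δ Kc : ℝ) (hs : 0 ≤ s) (hd : |d| ≤ δ)
    (hKc : Kc = ∑ k ∈ Finset.range (m + 1), δ ^ (m - k) * ((m + 2).choose k : ℝ)) :
    (s - d) ^ (m + 2) - s ^ (m + 2) ≤
      -((m + 2 : ℝ) * s ^ (m + 1) * d) + Kc * ((1 + s ^ m) * d ^ 2) := by
  have hδ : 0 ≤ δ := le_trans (abs_nonneg d) hd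
  have hexp : (s - d) ^ (m + 2) =
      ∑ k ∈ Finset.range (m + 3), s ^ k * (-d) ^ (m + 2 - k) * ((m + 2).choose k : ℝ) := by
    rw [sub_eq_add_neg, add_pow]
  rw [hexp]
  rw [Finset.sum_range_succ, Finset.sum_range_succ]
  have e1 : s ^ (m + 2) * (-d) ^ (m + 2 - (m + 2)) * (((m + 2).choose (m + 2) : ℕ) : ℝ)
      = s ^ (m + 2) := by
    simp
  have e2 : s ^ (m + 1) * (-d) ^ (m + 2 - (m + 1)) * (((m + 2).choose (m + 1) : ℕ) : ℝ)
      = -((m + 2 : ℝ) * s ^ (m + 1) * d) := by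
    have : m + 2 - (m + 1) = 1 := by omega
    rw [this, Nat.choose_succ_self_right]
    push_cast
    ring
  rw [e1, e2]
  have hmain : ∑ k ∈ Finset.range (m + 1), s ^ k * (-d) ^ (m + 2 - k) * (((m + 2).choose k : ℕ) : ℝ)
      ≤ Kc * ((1 + s ^ m) * d ^ 2) := by
    rw [hKc, Finset.sum_mul]
    apply Finset.sum_le_sum
    intro k hk
    have hkm : k ≤ m := Nat.lt_succ_iff.mp (Finset.mem_range.mp hk)
    have hsplit : m + 2 - k = (m - k) + 2 := by omega
    have hC : (0 : ℝ) ≤ ((m + 2).choose k : ℝ) := Nat.cast_nonneg _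
    have habs : s ^ k * (-d) ^ (m + 2 - k) * (((m + 2).choose k : ℕ) : ℝ)
        ≤ s ^ k * (|d| ^ (m + 2 - k)) * (((m + 2).choose k : ℕ) : ℝ) := by
      apply mul_le_mul_of_nonneg_right _ hC
      apply mul_le_mul_of_nonneg_left _ (pow_nonneg hs k)
      calc (-d) ^ (m + 2 - k) ≤ |(-d) ^ (m + 2 - k)| := le_abs_self _
        _ = |d| ^ (m + 2 - k) := by rw [abs_pow, abs_neg]
    refine le_trans habs ?_
    have h1 : |d| ^ (m + 2 - k) = |d| ^ (m - k) * d ^ 2 := by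
      rw [hsplit, pow_add, sq_abs]
    rw [h1]
    have h2 : s ^ k ≤ 1 + s ^ m := pow_le_one_add_pow hs hkm
    have h3 : |d| ^ (m - k) ≤ δ ^ (m - k) := pow_le_pow_left₀ (abs_nonneg d) hd _
    have hd2 : (0 : ℝ) ≤ d ^ 2 := sq_nonneg d
    calc s ^ k * (|d| ^ (m - k) * d ^ 2) * (((m + 2).choose k : ℕ) : ℝ)
        ≤ (1 + s ^ m) * (δ ^ (m - k) * d ^ 2) * (((m + 2).choose k : ℕ) : ℝ) := by
          apply mul_le_mul_of_nonneg_right _ hC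
          apply mul_le_mul h2 (mul_le_mul_of_nonneg_right h3 hd2)
            (mul_nonneg (pow_nonneg (abs_nonneg d) _) hd2) (by positivity)
      _ = δ ^ (m - k) * (((m + 2).choose k : ℕ) : ℝ) * ((1 + s ^ m) * d ^ 2) := by ring
  linarith

/-- Under the drift and diffusion bounds (i) and (ii) for the
reaction network `[N, w]` with positive weight vector `l`, for every integer `p ≥ 2`
there is a constant `C > 0` such that for all states `y ∈ ℤ₊^D`,
`∑_r w_r(y)·[(lᵀ(y − N_r))^p − (lᵀy)^p] ≤ C·(1 + (lᵀy)^p)`. -/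
theorem generator_pow_bound_exists_const (D R : ℕ) (hD : 1 ≤ D) (hR : 1 ≤ R)
    (Nm : Matrix (Fin D) (Fin R) ℤ) (l : Fin D → ℝ) (hl : ∀ i, 0 < l i)
    (w : Fin R → (Fin D → ℕ) → ℝ) (hw : ∀ r y, 0 ≤ w r y)
    (A α B β₁ β₂ : ℝ) (hB : 0 ≤ B) (hβ₁ : 0 ≤ β₁) (hβ₂ : 0 ≤ β₂)
    (h1 : ∀ y : Fin D → ℕ,
      -(∑ r, (∑ i, l i * (Nm i r : ℝ)) * w r y) ≤ A + α * ∑ i, l i * (y i : ℝ))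
    (h2 : ∀ y : Fin D → ℕ,
      (1 / 2 : ℝ) * ∑ r, (∑ i, l i * (Nm i r : ℝ)) ^ 2 * w r y ≤
        B + β₁ * (∑ i, l i * (y i : ℝ)) + β₂ * (∑ i, l i * (y i : ℝ)) ^ 2)
    (p : ℕ) (hp : 2 ≤ p) :
    ∃ C : ℝ, 0 < C ∧ ∀ y : Fin D → ℕ,
      ∑ r, w r y *
          ((∑ i, l i * ((y i : ℝ) - (Nm i r : ℝ))) ^ p - (∑ i, l i * (y i : ℝ)) ^ p) ≤
        C * (1 + (∑ i, l i * (y i : ℝ)) ^ p) := by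
  
  obtain ⟨m, rfl⟩ : ∃ m, p = m + 2 := ⟨p - 2, by omega⟩
  set d : Fin R → ℝ := fun r => ∑ i, l i * (Nm i r : ℝ) with hd
  have hRne : (Finset.univ : Finset (Fin R)).Nonempty := ⟨⟨0, hR⟩, Finset.mem_univ _⟩
  set δ : ℝ := Finset.univ.sup' hRne (fun r => |d r|) with hδdef
  have hdδ : ∀ r, |d r| ≤ δ := by
    intro r
    rw [hδdef]
    exact Finset.le_sup' (fun r => |d r|) (Finset.mem_univ r)
  have hδ0 : 0 ≤ δ := le_trans (abs_nonneg _) (hdδ ⟨0, hR⟩)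
  set Kc : ℝ := ∑ k ∈ Finset.range (m + 1), δ ^ (m - k) * ((m + 2).choose k : ℝ) with hKc
  have hKc0 : 0 ≤ Kc := Finset.sum_nonneg fun k _ =>
    mul_nonneg (pow_nonneg hδ0 _) (Nat.cast_nonneg _)
  refine ⟨(m + 2 : ℝ) * (|A| + |α|) + 4 * Kc * (B + β₁ + β₂) + 1, by positivity, ?_⟩
  intro y
  set s : ℝ := ∑ i, l i * (y i : ℝ) with hsdef
  have hs0 : 0 ≤ s := Finset.sum_nonneg fun i _ => mul_nonneg (hl i).le (Nat.cast_nonneg _)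
  have hlin : ∀ r, (∑ i, l i * ((y i : ℝ) - (Nm i r : ℝ))) = s - d r := by
    intro r
    rw [hsdef, hd, ← Finset.sum_sub_distrib]
    exact Finset.sum_congr rfl fun i _ => by ring
  have hT : (0 : ℝ) ≤ 1 + s ^ (m + 2) := by positivity
  -- power facts
  have hps : ∀ k, k ≤ m + 2 → s ^ k ≤ 1 + s ^ (m + 2) := fun k hk => pow_le_one_add_pow hs0 hk
  -- step 1: pointwise bound and summation
  have hstep : ∑ r, w r y * ((s - d r) ^ (m + 2) - s ^ (m + 2)) ≤
      (m + 2 : ℝ) * s ^ (m + 1) * (-(∑ r, d r * w r y)) +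
        Kc * (1 + s ^ m) * (∑ r, (d r) ^ 2 * w r y) := by
    have hpt : ∑ r, w r y * ((s - d r) ^ (m + 2) - s ^ (m + 2)) ≤
        ∑ r, w r y * (-((m + 2 : ℝ) * s ^ (m + 1) * d r) + Kc * ((1 + s ^ m) * (d r) ^ 2)) := by
      apply Finset.sum_le_sum
      intro r _
      exact mul_le_mul_of_nonneg_left (binom_key m s (d r) δ Kc hs0 (hdδ r) hKc) (hw r y)
    refine le_trans hpt (le_of_eq ?_)
    have hrw : ∀ r : Fin R, w r y * (-((m + 2 : ℝ) * s ^ (m + 1) * d r) + Kc * ((1 + s ^ m) * (d r) ^ 2))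
        = (m + 2 : ℝ) * s ^ (m + 1) * (-(d r * w r y)) + Kc * (1 + s ^ m) * ((d r) ^ 2 * w r y) :=
      fun r => by ring
    rw [Finset.sum_congr rfl fun r _ => hrw r, Finset.sum_add_distrib,
      ← Finset.mul_sum, ← Finset.mul_sum, Finset.sum_neg_distrib]
  -- apply h1, h2
  have hh1 : -(∑ r, d r * w r y) ≤ A + α * s := h1 y
  have hh2 : ∑ r, (d r) ^ 2 * w r y ≤ 2 * (B + β₁ * s + β₂ * s ^ 2) := by
    have := h2 y
    linarith
  have hm1 : (0 : ℝ) ≤ (m + 2 : ℝ) * s ^ (m + 1) := by positivity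
  have hm2 : (0 : ℝ) ≤ Kc * (1 + s ^ m) := by positivity
  have hstep2 : ∑ r, w r y * ((s - d r) ^ (m + 2) - s ^ (m + 2)) ≤
      (m + 2 : ℝ) * s ^ (m + 1) * (A + α * s) +
        Kc * (1 + s ^ m) * (2 * (B + β₁ * s + β₂ * s ^ 2)) := by
    refine le_trans hstep (add_le_add (mul_le_mul_of_nonneg_left hh1 hm1)
      (mul_le_mul_of_nonneg_left hh2 hm2))
  -- final polynomial bound
  have key : (m + 2 : ℝ) * s ^ (m + 1) * (A + α * s) +
        Kc * (1 + s ^ m) * (2 * (B + β₁ * s + β₂ * s ^ 2)) ≤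
      ((m + 2 : ℝ) * (|A| + |α|) + 4 * Kc * (B + β₁ + β₂) + 1) * (1 + s ^ (m + 2)) := by
    have e0 : s ^ 0 ≤ 1 + s ^ (m + 2) := hps 0 (by omega)
    have e1 : s ^ 1 ≤ 1 + s ^ (m + 2) := hps 1 (by omega)
    have e2 : s ^ 2 ≤ 1 + s ^ (m + 2) := hps 2 (by omega)
    have em : s ^ m ≤ 1 + s ^ (m + 2) := hps m (by omega)
    have em1 : s ^ (m + 1) ≤ 1 + s ^ (m + 2) := hps (m + 1) (by omega)
    have em2 : s ^ (m + 2) ≤ 1 + s ^ (m + 2) := hps (m + 2) (by omega)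
    have hA : A * s ^ (m + 1) ≤ |A| * (1 + s ^ (m + 2)) := by
      calc A * s ^ (m + 1) ≤ |A| * s ^ (m + 1) :=
            mul_le_mul_of_nonneg_right (le_abs_self A) (by positivity)
        _ ≤ |A| * (1 + s ^ (m + 2)) := mul_le_mul_of_nonneg_left em1 (abs_nonneg A)
    have hα : α * (s ^ (m + 1) * s) ≤ |α| * (1 + s ^ (m + 2)) := by
      have : s ^ (m + 1) * s = s ^ (m + 2) := by ring
      rw [this]
      calc α * s ^ (m + 2) ≤ |α| * s ^ (m + 2) :=
            mul_le_mul_of_nonneg_right (le_abs_self α) (by positivity)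
        _ ≤ |α| * (1 + s ^ (m + 2)) := mul_le_mul_of_nonneg_left em2 (abs_nonneg α)
    have hBm : B * s ^ m ≤ B * (1 + s ^ (m + 2)) := mul_le_mul_of_nonneg_left em hB
    have hβ1m : β₁ * (s ^ m * s) ≤ β₁ * (1 + s ^ (m + 2)) := by
      have : s ^ m * s = s ^ (m + 1) := by ring
      rw [this]; exact mul_le_mul_of_nonneg_left em1 hβ₁
    have hβ2m : β₂ * (s ^ m * s ^ 2) ≤ β₂ * (1 + s ^ (m + 2)) := by
      have : s ^ m * s ^ 2 = s ^ (m + 2) := by ring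
      rw [this]; exact mul_le_mul_of_nonneg_left em2 hβ₂
    have hB0 : B * (1:ℝ) ≤ B * (1 + s ^ (m + 2)) := by
      have := mul_le_mul_of_nonneg_left e0 hB; simpa using this
    have hβ10 : β₁ * s ≤ β₁ * (1 + s ^ (m + 2)) := by
      have := mul_le_mul_of_nonneg_left e1 hβ₁; simpa using this
    have hβ20 : β₂ * s ^ 2 ≤ β₂ * (1 + s ^ (m + 2)) := by
      exact mul_le_mul_of_nonneg_left e2 hβ₂
    linarith [mul_le_mul_of_nonneg_left hA (show (0:ℝ) ≤ (m+2:ℝ) by positivity),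
      mul_le_mul_of_nonneg_left hα (show (0:ℝ) ≤ (m+2:ℝ) by positivity),
      mul_le_mul_of_nonneg_left hBm hKc0, mul_le_mul_of_nonneg_left hβ1m hKc0,
      mul_le_mul_of_nonneg_left hβ2m hKc0, mul_le_mul_of_nonneg_left hB0 hKc0,
      mul_le_mul_of_nonneg_left hβ10 hKc0, mul_le_mul_of_nonneg_left hβ20 hKc0, hT]
  calc ∑ r, w r y * ((∑ i, l i * ((y i : ℝ) - (Nm i r : ℝ))) ^ (m + 2) - s ^ (m + 2))
      = ∑ r, w r y * ((s - d r) ^ (m + 2) - s ^ (m + 2)) :=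
        Finset.sum_congr rfl fun r _ => by rw [hlin r]
    _ ≤ _ := le_trans hstep2 key
end
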